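/- Let g_{ij} be a smooth symmetric metric on an open set U ⊆ ℝⁿ with smooth inverse g^{ij} (g_{ia} g^{aj} = δ_i^j), let Γ^i_{jk} be smooth Christoffel symbols that are metric-compatible (∂_m g_{ij} = Γ^a_{mi} g_{aj} + Γ^a_{mj} g_{ia}), with torsion T^i_{jk} and lowered torsion T_{abc} := g_{ad} T^d_{bc}. Set S^a_{bc} := (1/2) g^{ad}(T_{dbc} − T_{bcd} − T_{cbd}) and Γ̂^a_{bc} := Γ^a_{bc} − S^a_{bc}, and write (∇̂_k ω)^{ij} := ∂_k ω^{ij} + Γ̂^i_{km} ω^{mj} + Γ̂^j_{km} ω^{im} for a smooth antisymmetric bivector ω. Then the following are equivalent: (a) (ω, ∇) is Poisson-compatible; (b) (∇̂_k ω)^{ij} + ω^{ir} S^j_{rk} − ω^{jr} S^i_{rk} = 0 for all i, j, k; (c) ω^{jm} S^i_{mk} = (1/2)[(∇̂_k ω)^{ij} − (∇̂_r ω)^{mj} g^{ri} g_{mk} + (∇̂_r ω)^{im} g^{rj} g_{mk}] for all i, j, k. -/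

import Mathlib

namespace Stmt16

variable {n : ℕ}

/-- Partial derivative in the `i`-th coordinate direction. -/
noncomputable def pd (i : Fin n) (f : (Fin n → ℝ) → ℝ) (x : Fin n → ℝ) : ℝ :=
  fderiv ℝ f x (Pi.single i 1)

/-- Torsion `T^i_{jk} = Γ^i_{jk} - Γ^i_{kj}`. -/
def Tor (Γ : Fin n → Fin n → Fin n → (Fin n → ℝ) → ℝ) (i j k : Fin n)
    (x : Fin n → ℝ) : ℝ :=
  Γ i j k x - Γ i k j x

/-- Curvature `R^l_{ijk} = ∂_j Γ^l_{ki} − ∂_k Γ^l_{ji} + Γ^m_{ki} Γ^l_{jm} − Γ^m_{ji} Γ^l_{km}`. -/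
noncomputable def Rc (Γ : Fin n → Fin n → Fin n → (Fin n → ℝ) → ℝ) (l i j k : Fin n)
    (x : Fin n → ℝ) : ℝ :=
  pd j (Γ l k i) x - pd k (Γ l j i) x
    + ∑ m, Γ m k i x * Γ l j m x - ∑ m, Γ m j i x * Γ l k m x

/-- Covariant derivative of the torsion:
`T^j_{ab;s} = ∂_s T^j_{ab} + Γ^j_{sp} T^p_{ab} − Γ^p_{sa} T^j_{pb} − Γ^p_{sb} T^j_{ap}`. -/
noncomputable def covT (Γ : Fin n → Fin n → Fin n → (Fin n → ℝ) → ℝ) (j a b s : Fin n)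
    (x : Fin n → ℝ) : ℝ :=
  pd s (Tor Γ j a b) x + ∑ p, Γ j s p x * Tor Γ p a b x
    - ∑ p, Γ p s a x * Tor Γ j p b x - ∑ p, Γ p s b x * Tor Γ j a p x

/-- The pair `(ω, ∇)` is Poisson-compatible on `U`:
`∂_m ω^{ij} + ω^{kj} Γ^i_{km} + ω^{ik} Γ^j_{km} = 0`. -/
def PoissonCompat (U : Set (Fin n → ℝ)) (ω : Fin n → Fin n → (Fin n → ℝ) → ℝ)
    (Γ : Fin n → Fin n → Fin n → (Fin n → ℝ) → ℝ) : Prop :=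
  ∀ i j m, ∀ x ∈ U,
    pd m (ω i j) x + ∑ k, ω k j x * Γ i k m x + ∑ k, ω i k x * Γ j k m x = 0

/-- Lowered torsion `T_{abc} = g_{ad} T^d_{bc}`. -/
noncomputable def Tlow (g : Fin n → Fin n → (Fin n → ℝ) → ℝ)
    (Γ : Fin n → Fin n → Fin n → (Fin n → ℝ) → ℝ) (a b c : Fin n) (x : Fin n → ℝ) : ℝ :=
  ∑ d, g a d x * Tor Γ d b c x

/-- `S^a_{bc} = (1/2) g^{ad}(T_{dbc} − T_{bcd} − T_{cbd})`. -/
noncomputable def Scon (g ginv : Fin n → Fin n → (Fin n → ℝ) → ℝ)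
    (Γ : Fin n → Fin n → Fin n → (Fin n → ℝ) → ℝ) (a b c : Fin n) (x : Fin n → ℝ) : ℝ :=
  (1 / 2 : ℝ) * ∑ d, ginv a d x *
    (Tlow g Γ d b c x - Tlow g Γ b c d x - Tlow g Γ c b d x)

/-- `(∇̂_k ω)^{ij} = ∂_k ω^{ij} + Γ̂^i_{km} ω^{mj} + Γ̂^j_{km} ω^{im}` for `Γ̂ = Γ − S`. -/
noncomputable def nhat (g ginv ω : Fin n → Fin n → (Fin n → ℝ) → ℝ)
    (Γ : Fin n → Fin n → Fin n → (Fin n → ℝ) → ℝ) (k i j : Fin n) (x : Fin n → ℝ) : ℝ :=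
  pd k (ω i j) x
    + ∑ m, (Γ i k m x - Scon g ginv Γ i k m x) * ω m j x
    + ∑ m, (Γ j k m x - Scon g ginv Γ j k m x) * ω i m x

/-- collapse `Gi * G` contraction -/
lemma contract1 {n : ℕ} (G Gi : Fin n → Fin n → ℝ)
    (h2 : ∀ i j, ∑ a, Gi i a * G a j = if i = j then 1 else 0)
    (f : Fin n → ℝ) (a : Fin n) :
    ∑ d, Gi a d * ∑ e, G d e * f e = f a := by
  calc ∑ d, Gi a d * ∑ e, G d e * f e
      = ∑ d, ∑ e, Gi a d * G d e * f e := by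
        refine Finset.sum_congr rfl fun d _ => ?_
        rw [Finset.mul_sum]; exact Finset.sum_congr rfl fun e _ => by ring
    _ = ∑ e, (∑ d, Gi a d * G d e) * f e := by
        rw [Finset.sum_comm]
        exact Finset.sum_congr rfl fun e _ => by rw [Finset.sum_mul]
    _ = f a := by simp [h2, ite_mul, Finset.sum_ite_eq]

lemma inv_flip {n : ℕ} (G Gi : Fin n → Fin n → ℝ)
    (h1 : ∀ i j, ∑ a, G i a * Gi a j = if i = j then 1 else 0) :
    ∀ i j, ∑ a, Gi i a * G a j = if i = j then 1 else 0 := by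
  have hM : (Matrix.of G) * (Matrix.of Gi) = 1 := by
    ext i j
    simpa [Matrix.mul_apply, Matrix.one_apply] using h1 i j
  have hN : (Matrix.of Gi) * (Matrix.of G) = 1 := mul_eq_one_comm.mp hM
  intro i j
  have h := congrFun (congrFun hN i) j
  simpa [Matrix.mul_apply, Matrix.one_apply] using h

lemma inv_symm {n : ℕ} (G Gi : Fin n → Fin n → ℝ)
    (hGs : ∀ i j, G i j = G j i)
    (h1 : ∀ i j, ∑ a, G i a * Gi a j = if i = j then 1 else 0) :
    ∀ i j, Gi i j = Gi j i := by
  have hM : (Matrix.of G) * (Matrix.of Gi) = 1 := by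
    ext i j
    simpa [Matrix.mul_apply, Matrix.one_apply] using h1 i j
  have hMt : (Matrix.of G).transpose = Matrix.of G := by
    ext i j; exact hGs j i
  have key : (Matrix.of Gi).transpose = Matrix.of Gi := by
    calc (Matrix.of Gi).transpose
        = (Matrix.of Gi).transpose * ((Matrix.of G) * (Matrix.of Gi)) := by
          rw [hM, mul_one]
      _ = ((Matrix.of Gi).transpose * (Matrix.of G).transpose) * (Matrix.of Gi) := by
          rw [hMt, mul_assoc]
      _ = ((Matrix.of G) * (Matrix.of Gi)).transpose * (Matrix.of Gi) := by
          rw [Matrix.transpose_mul]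
      _ = Matrix.of Gi := by rw [hM, Matrix.transpose_one, one_mul]
  intro i j
  have h := congrFun (congrFun key j) i
  simpa [Matrix.transpose_apply] using h

/-- kill: if `v · G = 0` then `v = 0`. -/
lemma kill {n : ℕ} (G Gi : Fin n → Fin n → ℝ)
    (h1 : ∀ i j, ∑ a, G i a * Gi a j = if i = j then 1 else 0)
    (v : Fin n → ℝ) (hv : ∀ b, ∑ q, v q * G q b = 0) : ∀ j, v j = 0 := by
  intro j
  have : v j = ∑ b, (∑ q, v q * G q b) * Gi b j := by
    calc v j = ∑ q, v q * (if q = j then 1 else 0) := by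
          simp [mul_ite, Finset.sum_ite_eq']
      _ = ∑ q, v q * ∑ b, G q b * Gi b j := by
          exact Finset.sum_congr rfl fun q _ => by rw [h1]
      _ = ∑ q, ∑ b, v q * G q b * Gi b j := by
          refine Finset.sum_congr rfl fun q _ => ?_
          rw [Finset.mul_sum]; exact Finset.sum_congr rfl fun b _ => by ring
      _ = ∑ b, (∑ q, v q * G q b) * Gi b j := by
          rw [Finset.sum_comm]
          exact Finset.sum_congr rfl fun b _ => by rw [Finset.sum_mul]
  simp [this, hv]


section Point
variable {n : ℕ} (g ginv ω : Fin n → Fin n → (Fin n → ℝ) → ℝ)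
  (Γ : Fin n → Fin n → Fin n → (Fin n → ℝ) → ℝ) (x : Fin n → ℝ)

lemma tor_antisym (a b c : Fin n) : Tor Γ a b c x = -Tor Γ a c b x := by
  simp only [Tor]; ring

lemma tlow_antisym (a b c : Fin n) : Tlow g Γ a b c x = -Tlow g Γ a c b x := by
  unfold Tlow
  rw [← Finset.sum_neg_distrib]
  exact Finset.sum_congr rfl fun d _ => by rw [tor_antisym]; ring

lemma slx_antisym (k p r : Fin n) :
    Tlow g Γ k p r x - Tlow g Γ p r k x - Tlow g Γ r p k x
      = -(Tlow g Γ r p k x - Tlow g Γ p k r x - Tlow g Γ k p r x) := by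
  have h := tlow_antisym g Γ x p r k
  linear_combination -h

lemma scon_sub
    (h2 : ∀ i j, ∑ a, ginv i a x * g a j x = if i = j then 1 else 0)
    (a b c : Fin n) :
    Scon g ginv Γ a b c x - Scon g ginv Γ a c b x = Tor Γ a b c x := by
  have step1 : Scon g ginv Γ a b c x - Scon g ginv Γ a c b x
      = ∑ d, ginv a d x * Tlow g Γ d b c x := by
    simp only [Scon]
    rw [Finset.mul_sum, Finset.mul_sum, ← Finset.sum_sub_distrib]
    refine Finset.sum_congr rfl fun d _ => ?_
    have h3 := tlow_antisym g Γ x d c b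
    linear_combination (-(1/2 : ℝ)) * ginv a d x * h3
  rw [step1]
  exact contract1 (fun p q => g p q x) (fun p q => ginv p q x) h2
    (fun e => Tor Γ e b c x) a

lemma g_scon
    (h1 : ∀ i j, ∑ a, g i a x * ginv a j x = if i = j then 1 else 0)
    (k p r : Fin n) :
    ∑ m, g k m x * Scon g ginv Γ m p r x
      = (1/2 : ℝ) * (Tlow g Γ k p r x - Tlow g Γ p r k x - Tlow g Γ r p k x) := by
  have hc := contract1 (fun pp qq => ginv pp qq x) (fun pp qq => g pp qq x) h1
    (fun d => Tlow g Γ d p r x - Tlow g Γ p r d x - Tlow g Γ r p d x) k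
  calc ∑ m, g k m x * Scon g ginv Γ m p r x
      = (1/2 : ℝ) * ∑ m, g k m x *
          ∑ d, ginv m d x * (Tlow g Γ d p r x - Tlow g Γ p r d x - Tlow g Γ r p d x) := by
        rw [Finset.mul_sum]
        refine Finset.sum_congr rfl fun m _ => ?_
        simp only [Scon]; ring
    _ = (1/2 : ℝ) * (Tlow g Γ k p r x - Tlow g Γ p r k x - Tlow g Γ r p k x) := by
        rw [hc]

lemma qasym
    (hGis : ∀ i j, ginv i j x = ginv j i x) (u v p : Fin n) :
    (∑ r, Scon g ginv Γ u p r x * ginv r v x)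
      + (∑ r, Scon g ginv Γ v p r x * ginv r u x) = 0 := by
  have e1 : ∀ (u v : Fin n), ∑ r, Scon g ginv Γ u p r x * ginv r v x
      = ∑ r, ∑ d, (1/2 : ℝ) * (ginv u d x *
          (Tlow g Γ d p r x - Tlow g Γ p r d x - Tlow g Γ r p d x) * ginv r v x) := by
    intro u v
    refine Finset.sum_congr rfl fun r _ => ?_
    calc Scon g ginv Γ u p r x * ginv r v x
        = (1/2 : ℝ) * ((∑ d, ginv u d x *
            (Tlow g Γ d p r x - Tlow g Γ p r d x - Tlow g Γ r p d x)) * ginv r v x) := by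
          simp only [Scon]; ring
      _ = ∑ d, (1/2 : ℝ) * (ginv u d x *
            (Tlow g Γ d p r x - Tlow g Γ p r d x - Tlow g Γ r p d x) * ginv r v x) := by
          rw [Finset.sum_mul, Finset.mul_sum]
  rw [e1 u v, e1 v u]
  rw [Finset.sum_comm (f := fun r d => (1/2 : ℝ) * (ginv v d x *
      (Tlow g Γ d p r x - Tlow g Γ p r d x - Tlow g Γ r p d x) * ginv r u x))]
  rw [← Finset.sum_add_distrib]
  rw [show (0:ℝ) = ∑ r : Fin n, 0 by simp]
  refine Finset.sum_congr rfl fun r _ => ?_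
  rw [← Finset.sum_add_distrib]
  rw [show (0:ℝ) = ∑ d : Fin n, 0 by simp]
  refine Finset.sum_congr rfl fun d _ => ?_
  have hsl := slx_antisym g Γ x r p d
  have h1 := hGis v r
  have h2 := hGis d u
  linear_combination (1/2 : ℝ) * ginv u d x * ginv r v x * (slx_antisym g Γ x d p r)
    + (1/2 : ℝ) * (Tlow g Γ r p d x - Tlow g Γ p d r x - Tlow g Γ d p r x) * (ginv d u x * h1 + ginv r v x * h2)


lemma c1a
    (h1 : ∀ i j, ∑ a, g i a x * ginv a j x = if i = j then 1 else 0)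
    (hGs : ∀ i j, g i j x = g j i x)
    (hGis : ∀ i j, ginv i j x = ginv j i x)
    (i j k : Fin n) :
    ∑ r, ∑ m, (∑ p, ω j p x * Scon g ginv Γ m p r x) * ginv r i x * g m k x
      = -∑ p, ω j p x * Scon g ginv Γ i p k x := by
  calc ∑ r, ∑ m, (∑ p, ω j p x * Scon g ginv Γ m p r x) * ginv r i x * g m k x
      = ∑ r, ∑ p, ω j p x * ginv r i x * ∑ m, g k m x * Scon g ginv Γ m p r x := by
        refine Finset.sum_congr rfl fun r _ => ?_
        calc ∑ m, (∑ p, ω j p x * Scon g ginv Γ m p r x) * ginv r i x * g m k x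
            = ∑ m, ∑ p, ω j p x * ginv r i x * (g k m x * Scon g ginv Γ m p r x) := by
              refine Finset.sum_congr rfl fun m _ => ?_
              rw [Finset.sum_mul, Finset.sum_mul]
              refine Finset.sum_congr rfl fun p _ => ?_
              rw [hGs m k]; ring
          _ = ∑ p, ∑ m, ω j p x * ginv r i x * (g k m x * Scon g ginv Γ m p r x) := by
              rw [Finset.sum_comm]
          _ = ∑ p, ω j p x * ginv r i x * ∑ m, g k m x * Scon g ginv Γ m p r x := by
              refine Finset.sum_congr rfl fun p _ => ?_
              rw [Finset.mul_sum]
      _ = ∑ r, ∑ p, ω j p x * ginv r i x * ((1/2 : ℝ) *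
            (Tlow g Γ k p r x - Tlow g Γ p r k x - Tlow g Γ r p k x)) := by
        refine Finset.sum_congr rfl fun r _ => Finset.sum_congr rfl fun p _ => ?_
        rw [g_scon g ginv Γ x h1]
      _ = ∑ p, ∑ r, ω j p x * ginv r i x * ((1/2 : ℝ) *
            (Tlow g Γ k p r x - Tlow g Γ p r k x - Tlow g Γ r p k x)) := by
        rw [Finset.sum_comm]
      _ = ∑ p, -(ω j p x * Scon g ginv Γ i p k x) := by
        refine Finset.sum_congr rfl fun p _ => ?_
        have hsc : Scon g ginv Γ i p k x = (1/2 : ℝ) * ∑ r, ginv i r x *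
            (Tlow g Γ r p k x - Tlow g Γ p k r x - Tlow g Γ k p r x) := rfl
        rw [hsc, Finset.mul_sum, Finset.mul_sum, ← Finset.sum_neg_distrib]
        refine Finset.sum_congr rfl fun r _ => ?_
        have hsl := slx_antisym g Γ x k p r
        have hgg := hGis r i
        linear_combination (ω j p x * ginv r i x * (1/2 : ℝ)) * hsl
          - (ω j p x * (1/2:ℝ) * (Tlow g Γ r p k x - Tlow g Γ p k r x - Tlow g Γ k p r x)) * hgg
      _ = -∑ p, ω j p x * Scon g ginv Γ i p k x := by
        rw [← Finset.sum_neg_distrib]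

/-- The Poisson-compatibility expression. -/
noncomputable def PoisE (ω : Fin n → Fin n → (Fin n → ℝ) → ℝ)
    (Γ : Fin n → Fin n → Fin n → (Fin n → ℝ) → ℝ) (i j k : Fin n) (x : Fin n → ℝ) : ℝ :=
  pd k (ω i j) x + ∑ m, ω m j x * Γ i m k x + ∑ m, ω i m x * Γ j m k x

/-- The contorsion part of `nhat`. -/
noncomputable def Bb (g ginv ω : Fin n → Fin n → (Fin n → ℝ) → ℝ)
    (Γ : Fin n → Fin n → Fin n → (Fin n → ℝ) → ℝ) (i j k : Fin n) (x : Fin n → ℝ) : ℝ :=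
  ∑ r, ω j r x * Scon g ginv Γ i r k x - ∑ r, ω i r x * Scon g ginv Γ j r k x

lemma nhat_eq
    (h2 : ∀ i j, ∑ a, ginv i a x * g a j x = if i = j then 1 else 0)
    (hW : ∀ i j, ω i j x = -ω j i x)
    (i j k : Fin n) :
    nhat g ginv ω Γ k i j x = PoisE ω Γ i j k x + Bb g ginv ω Γ i j k x := by
  simp only [nhat, PoisE, Bb]
  have key : ∀ m : Fin n,
      (Γ i k m x - Scon g ginv Γ i k m x) * ω m j x
        + (Γ j k m x - Scon g ginv Γ j k m x) * ω i m x
      = ω m j x * Γ i m k x + ω i m x * Γ j m k x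
        + (ω j m x * Scon g ginv Γ i m k x - ω i m x * Scon g ginv Γ j m k x) := by
    intro m
    have h6i := scon_sub g ginv Γ x h2 i k m
    have h6j := scon_sub g ginv Γ x h2 j k m
    simp only [Tor] at h6i h6j
    rw [hW m j]
    linear_combination (ω j m x) * h6i - (ω i m x) * h6j
  have main : (∑ m, (Γ i k m x - Scon g ginv Γ i k m x) * ω m j x)
      + (∑ m, (Γ j k m x - Scon g ginv Γ j k m x) * ω i m x)
      = (∑ m, ω m j x * Γ i m k x) + (∑ m, ω i m x * Γ j m k x)
        + ((∑ r, ω j r x * Scon g ginv Γ i r k x)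
            - (∑ r, ω i r x * Scon g ginv Γ j r k x)) := by
    rw [← Finset.sum_add_distrib, ← Finset.sum_sub_distrib, ← Finset.sum_add_distrib,
      ← Finset.sum_add_distrib]
    exact Finset.sum_congr rfl fun m _ => key m
  linarith [main]

lemma u23
    (hGis : ∀ i j, ginv i j x = ginv j i x)
    (i j k : Fin n) :
    (∑ r, ∑ m, (∑ p, ω m p x * Scon g ginv Γ j p r x) * ginv r i x * g m k x)
      + (∑ r, ∑ m, (∑ p, ω m p x * Scon g ginv Γ i p r x) * ginv r j x * g m k x)
      = 0 := by
  have move : ∀ (u v : Fin n),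
      ∑ r, ∑ m, (∑ p, ω m p x * Scon g ginv Γ u p r x) * ginv r v x * g m k x
        = ∑ m, ∑ p, (ω m p x * g m k x) * ∑ r, Scon g ginv Γ u p r x * ginv r v x := by
    intro u v
    calc ∑ r, ∑ m, (∑ p, ω m p x * Scon g ginv Γ u p r x) * ginv r v x * g m k x
        = ∑ r, ∑ m, ∑ p, (ω m p x * g m k x) * (Scon g ginv Γ u p r x * ginv r v x) := by
          refine Finset.sum_congr rfl fun r _ => Finset.sum_congr rfl fun m _ => ?_
          rw [Finset.sum_mul, Finset.sum_mul]
          exact Finset.sum_congr rfl fun p _ => by ring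
      _ = ∑ m, ∑ r, ∑ p, (ω m p x * g m k x) * (Scon g ginv Γ u p r x * ginv r v x) := by
          rw [Finset.sum_comm]
      _ = ∑ m, ∑ p, ∑ r, (ω m p x * g m k x) * (Scon g ginv Γ u p r x * ginv r v x) := by
          refine Finset.sum_congr rfl fun m _ => ?_
          rw [Finset.sum_comm]
      _ = ∑ m, ∑ p, (ω m p x * g m k x) * ∑ r, Scon g ginv Γ u p r x * ginv r v x := by
          refine Finset.sum_congr rfl fun m _ => Finset.sum_congr rfl fun p _ => ?_
          rw [Finset.mul_sum]
  rw [move j i, move i j, ← Finset.sum_add_distrib]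
  rw [show (0:ℝ) = ∑ m : Fin n, 0 by simp]
  refine Finset.sum_congr rfl fun m _ => ?_
  rw [← Finset.sum_add_distrib]
  rw [show (0:ℝ) = ∑ p : Fin n, 0 by simp]
  refine Finset.sum_congr rfl fun p _ => ?_
  rw [← mul_add, qasym g ginv Γ x hGis j i p, mul_zero]

lemma phiB
    (h1 : ∀ i j, ∑ a, g i a x * ginv a j x = if i = j then 1 else 0)
    (hGs : ∀ i j, g i j x = g j i x)
    (hGis : ∀ i j, ginv i j x = ginv j i x)
    (i j k : Fin n) :
    Bb g ginv ω Γ i j k x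
      - ∑ r, ∑ m, Bb g ginv ω Γ m j r x * ginv r i x * g m k x
      + ∑ r, ∑ m, Bb g ginv ω Γ i m r x * ginv r j x * g m k x
    = 2 * ∑ p, ω j p x * Scon g ginv Γ i p k x := by
  have split2 : ∑ r, ∑ m, Bb g ginv ω Γ m j r x * ginv r i x * g m k x
      = (∑ r, ∑ m, (∑ p, ω j p x * Scon g ginv Γ m p r x) * ginv r i x * g m k x)
        - (∑ r, ∑ m, (∑ p, ω m p x * Scon g ginv Γ j p r x) * ginv r i x * g m k x) := by
    rw [← Finset.sum_sub_distrib]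
    refine Finset.sum_congr rfl fun r _ => ?_
    rw [← Finset.sum_sub_distrib]
    refine Finset.sum_congr rfl fun m _ => ?_
    simp only [Bb]; ring
  have split3 : ∑ r, ∑ m, Bb g ginv ω Γ i m r x * ginv r j x * g m k x
      = (∑ r, ∑ m, (∑ p, ω m p x * Scon g ginv Γ i p r x) * ginv r j x * g m k x)
        - (∑ r, ∑ m, (∑ p, ω i p x * Scon g ginv Γ m p r x) * ginv r j x * g m k x) := by
    rw [← Finset.sum_sub_distrib]
    refine Finset.sum_congr rfl fun r _ => ?_
    rw [← Finset.sum_sub_distrib]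
    refine Finset.sum_congr rfl fun m _ => ?_
    simp only [Bb]; ring
  rw [split2, split3, c1a g ginv ω Γ x h1 hGs hGis i j k, c1a g ginv ω Γ x h1 hGs hGis j i k]
  have h0 := u23 g ginv ω Γ x hGis i j k
  simp only [Bb]
  linarith [h0]

end Point

lemma sum_delta {n : ℕ} (D : Fin n → ℝ) (a : Fin n) :
    ∑ r, D r * (if r = a then (1:ℝ) else 0) = D a := by
  simp [mul_ite, Finset.sum_ite_eq']

lemma recover {n : ℕ} (G Gi : Fin n → Fin n → ℝ)
    (h1 : ∀ i j, ∑ a, G i a * Gi a j = if i = j then 1 else 0)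
    (h2 : ∀ i j, ∑ a, Gi i a * G a j = if i = j then 1 else 0)
    (p : Fin n → Fin n → Fin n → ℝ)
    (hpa : ∀ i j k, p i j k = - p j i k)
    (hphi : ∀ i j k, p i j k - (∑ r, ∑ m, p m j r * Gi r i * G m k)
        + (∑ r, ∑ m, p i m r * Gi r j * G m k) = 0) :
    ∀ i j k, p i j k = 0 := by
  set Y : Fin n → Fin n → Fin n → ℝ :=
    fun a b c => ∑ i, ∑ j, p i j c * G i a * G j b with hYdef
  have E2 : ∀ a b k, ∑ i, ∑ j, (∑ r, ∑ m, p m j r * Gi r i * G m k) * (G i a * G j b)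
      = Y k b a := by
    intro a b k
    calc ∑ i, ∑ j, (∑ r, ∑ m, p m j r * Gi r i * G m k) * (G i a * G j b)
        = ∑ i, ∑ j, ∑ r, ∑ m, (p m j r * G m k * G j b) * (Gi r i * G i a) := by
          refine Finset.sum_congr rfl fun i _ => Finset.sum_congr rfl fun j _ => ?_
          rw [Finset.sum_mul]
          refine Finset.sum_congr rfl fun r _ => ?_
          rw [Finset.sum_mul]
          exact Finset.sum_congr rfl fun m _ => by ring
      _ = ∑ i, ∑ r, ∑ j, ∑ m, (p m j r * G m k * G j b) * (Gi r i * G i a) := by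
          refine Finset.sum_congr rfl fun i _ => ?_
          rw [Finset.sum_comm]
      _ = ∑ r, ∑ i, ∑ j, ∑ m, (p m j r * G m k * G j b) * (Gi r i * G i a) := by
          rw [Finset.sum_comm]
      _ = ∑ r, ∑ j, ∑ i, ∑ m, (p m j r * G m k * G j b) * (Gi r i * G i a) := by
          refine Finset.sum_congr rfl fun r _ => ?_
          rw [Finset.sum_comm]
      _ = ∑ r, ∑ j, ∑ m, ∑ i, (p m j r * G m k * G j b) * (Gi r i * G i a) := by
          refine Finset.sum_congr rfl fun r _ => Finset.sum_congr rfl fun j _ => ?_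
          rw [Finset.sum_comm]
      _ = ∑ r, (∑ j, ∑ m, p m j r * G m k * G j b) * (if r = a then (1:ℝ) else 0) := by
          refine Finset.sum_congr rfl fun r _ => ?_
          rw [Finset.sum_mul]
          refine Finset.sum_congr rfl fun j _ => ?_
          rw [Finset.sum_mul]
          refine Finset.sum_congr rfl fun m _ => ?_
          rw [← Finset.mul_sum, h2 r a]
      _ = ∑ j, ∑ m, p m j a * G m k * G j b := sum_delta _ a
      _ = ∑ m, ∑ j, p m j a * G m k * G j b := by rw [Finset.sum_comm]
      _ = Y k b a := rfl
  have E3 : ∀ a b k, ∑ i, ∑ j, (∑ r, ∑ m, p i m r * Gi r j * G m k) * (G i a * G j b)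
      = Y a k b := by
    intro a b k
    calc ∑ i, ∑ j, (∑ r, ∑ m, p i m r * Gi r j * G m k) * (G i a * G j b)
        = ∑ i, ∑ j, ∑ r, ∑ m, (p i m r * G i a * G m k) * (Gi r j * G j b) := by
          refine Finset.sum_congr rfl fun i _ => Finset.sum_congr rfl fun j _ => ?_
          rw [Finset.sum_mul]
          refine Finset.sum_congr rfl fun r _ => ?_
          rw [Finset.sum_mul]
          exact Finset.sum_congr rfl fun m _ => by ring
      _ = ∑ j, ∑ i, ∑ r, ∑ m, (p i m r * G i a * G m k) * (Gi r j * G j b) := by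
          rw [Finset.sum_comm]
      _ = ∑ j, ∑ r, ∑ i, ∑ m, (p i m r * G i a * G m k) * (Gi r j * G j b) := by
          refine Finset.sum_congr rfl fun j _ => ?_
          rw [Finset.sum_comm]
      _ = ∑ r, ∑ j, ∑ i, ∑ m, (p i m r * G i a * G m k) * (Gi r j * G j b) := by
          rw [Finset.sum_comm]
      _ = ∑ r, ∑ i, ∑ m, ∑ j, (p i m r * G i a * G m k) * (Gi r j * G j b) := by
          refine Finset.sum_congr rfl fun r _ => ?_
          rw [Finset.sum_comm]
          exact Finset.sum_congr rfl fun i _ => by rw [Finset.sum_comm]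
      _ = ∑ r, (∑ i, ∑ m, p i m r * G i a * G m k) * (if r = b then (1:ℝ) else 0) := by
          refine Finset.sum_congr rfl fun r _ => ?_
          rw [Finset.sum_mul]
          refine Finset.sum_congr rfl fun i _ => ?_
          rw [Finset.sum_mul]
          refine Finset.sum_congr rfl fun m _ => ?_
          rw [← Finset.mul_sum, h2 r b]
      _ = ∑ i, ∑ m, p i m b * G i a * G m k := sum_delta _ b
      _ = Y a k b := rfl
  have hcon : ∀ a b k, Y a b k - Y k b a + Y a k b = 0 := by
    intro a b k
    have zero : ∑ i, ∑ j, ((p i j k - (∑ r, ∑ m, p m j r * Gi r i * G m k)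
        + (∑ r, ∑ m, p i m r * Gi r j * G m k)) * (G i a * G j b)) = 0 := by
      rw [show (0:ℝ) = ∑ i : Fin n, ∑ j : Fin n, 0 by simp]
      refine Finset.sum_congr rfl fun i _ => Finset.sum_congr rfl fun j _ => ?_
      rw [hphi i j k, zero_mul]
    have expand : ∑ i, ∑ j, ((p i j k - (∑ r, ∑ m, p m j r * Gi r i * G m k)
        + (∑ r, ∑ m, p i m r * Gi r j * G m k)) * (G i a * G j b))
        = (∑ i, ∑ j, p i j k * G i a * G j b)
          - (∑ i, ∑ j, (∑ r, ∑ m, p m j r * Gi r i * G m k) * (G i a * G j b))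
          + (∑ i, ∑ j, (∑ r, ∑ m, p i m r * Gi r j * G m k) * (G i a * G j b)) := by
      rw [← Finset.sum_sub_distrib, ← Finset.sum_add_distrib]
      refine Finset.sum_congr rfl fun i _ => ?_
      rw [← Finset.sum_sub_distrib, ← Finset.sum_add_distrib]
      exact Finset.sum_congr rfl fun j _ => by ring
    have := expand ▸ zero
    rw [E2, E3] at this
    exact this
  have hYa : ∀ a b c, Y a b c = - Y b a c := by
    intro a b c
    calc Y a b c = ∑ i, ∑ j, p j i c * G j a * G i b := by
          show (∑ i, ∑ j, p i j c * G i a * G j b) = _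
          rw [Finset.sum_comm]
      _ = ∑ i, ∑ j, -(p i j c * G i b * G j a) := by
          refine Finset.sum_congr rfl fun i _ => Finset.sum_congr rfl fun j _ => ?_
          rw [hpa j i c]; ring
      _ = - Y b a c := by
          simp only [Finset.sum_neg_distrib]; rfl
  have hY0 : ∀ a b c, Y a b c = 0 := by
    intro a b c
    have hc1 := hcon c b a
    have hc2 := hcon b a c
    have he1 := hYa b a c
    have he2 := hYa b c a
    linear_combination (-(1:ℝ)/2) * hc1 - (1/2 : ℝ) * hc2 + (1/2 : ℝ) * he1 + (1/2 : ℝ) * he2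
  intro i j k
  have step1 : ∀ i0 b, ∑ q, p i0 q k * G q b = 0 := by
    intro i0 b
    refine kill G Gi h1 (fun i' => ∑ q, p i' q k * G q b) (fun a => ?_) i0
    have hy := hY0 a b k
    calc ∑ i', (∑ q, p i' q k * G q b) * G i' a
        = ∑ i', ∑ q, p i' q k * G i' a * G q b := by
          refine Finset.sum_congr rfl fun i' _ => ?_
          rw [Finset.sum_mul]
          exact Finset.sum_congr rfl fun q _ => by ring
      _ = 0 := hy
  exact kill G Gi h1 (fun q => p i q k) (step1 i) j


lemma pd_antisym {n : ℕ} (U : Set (Fin n → ℝ)) (hU : IsOpen U)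
    (ω : Fin n → Fin n → (Fin n → ℝ) → ℝ)
    (hanti : ∀ i j, ∀ x ∈ U, ω i j x = - ω j i x)
    (i j m : Fin n) (x : Fin n → ℝ) (hx : x ∈ U) :
    pd m (ω i j) x = - pd m (ω j i) x := by
  have hev : ω i j =ᶠ[nhds x] fun y => -ω j i y := by
    filter_upwards [hU.mem_nhds hx] with y hy using hanti i j y hy
  unfold pd
  rw [Filter.EventuallyEq.fderiv_eq hev, fderiv_fun_neg]
  simp

/-- for a metric-compatible `∇`, Poisson-compatibility of `(ω,∇)` is
equivalent to either of the two displayed conditions in terms of the Levi-Civita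
covariant derivative `∇̂` and the contorsion `S`. -/
theorem statement_16 (U : Set (Fin n → ℝ)) (hU : IsOpen U)
    (ω g ginv : Fin n → Fin n → (Fin n → ℝ) → ℝ)
    (Γ : Fin n → Fin n → Fin n → (Fin n → ℝ) → ℝ)
    (hωs : ∀ i j, ContDiffOn ℝ (⊤ : ℕ∞) (ω i j) U)
    (hgs : ∀ i j, ContDiffOn ℝ (⊤ : ℕ∞) (g i j) U)
    (hginvs : ∀ i j, ContDiffOn ℝ (⊤ : ℕ∞) (ginv i j) U)
    (hΓs : ∀ i j k, ContDiffOn ℝ (⊤ : ℕ∞) (Γ i j k) U)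
    (hanti : ∀ i j, ∀ x ∈ U, ω i j x = - ω j i x)
    (hgsym : ∀ i j, ∀ x ∈ U, g i j x = g j i x)
    (hinv : ∀ i j, ∀ x ∈ U, ∑ a, g i a x * ginv a j x = if i = j then 1 else 0)
    (hmetric : ∀ i j m, ∀ x ∈ U,
        pd m (g i j) x = ∑ a, Γ a m i x * g a j x + ∑ a, Γ a m j x * g i a x) :
    (PoissonCompat U ω Γ ↔
      ∀ i j k, ∀ x ∈ U,
        nhat g ginv ω Γ k i j x + ∑ r, ω i r x * Scon g ginv Γ j r k x
          - ∑ r, ω j r x * Scon g ginv Γ i r k x = 0) ∧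
    (PoissonCompat U ω Γ ↔
      ∀ i j k, ∀ x ∈ U,
        ∑ m, ω j m x * Scon g ginv Γ i m k x
          = (1 / 2 : ℝ) *
            (nhat g ginv ω Γ k i j x
              - ∑ r, ∑ m, nhat g ginv ω Γ r m j x * ginv r i x * g m k x
              + ∑ r, ∑ m, nhat g ginv ω Γ r i m x * ginv r j x * g m k x)) := by
  constructor
  · constructor
    · intro hP i j k x hx
      have h1x : ∀ a b, ∑ c, g a c x * ginv c b x = if a = b then 1 else 0 :=
        fun a b => hinv a b x hx
      have h2x := inv_flip (fun p q => g p q x) (fun p q => ginv p q x) h1x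
      have hWx : ∀ a b, ω a b x = -ω b a x := fun a b => hanti a b x hx
      have hne := nhat_eq g ginv ω Γ x h2x hWx i j k
      have hp := hP i j k x hx
      simp only [PoisE, Bb] at hne
      linarith [hne, hp]
    · intro hb i j m x hx
      have h1x : ∀ a b, ∑ c, g a c x * ginv c b x = if a = b then 1 else 0 :=
        fun a b => hinv a b x hx
      have h2x := inv_flip (fun p q => g p q x) (fun p q => ginv p q x) h1x
      have hWx : ∀ a b, ω a b x = -ω b a x := fun a b => hanti a b x hx
      have hne := nhat_eq g ginv ω Γ x h2x hWx i j m
      have hbx := hb i j m x hx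
      simp only [PoisE, Bb] at hne
      linarith [hne, hbx]
  · constructor
    · intro hP i j k x hx
      have h1x : ∀ a b, ∑ c, g a c x * ginv c b x = if a = b then 1 else 0 :=
        fun a b => hinv a b x hx
      have h2x := inv_flip (fun p q => g p q x) (fun p q => ginv p q x) h1x
      have hGsx : ∀ a b, g a b x = g b a x := fun a b => hgsym a b x hx
      have hGisx := inv_symm (fun p q => g p q x) (fun p q => ginv p q x) hGsx h1x
      have hWx : ∀ a b, ω a b x = -ω b a x := fun a b => hanti a b x hx
      have key : ∀ a b c, nhat g ginv ω Γ c a b x = Bb g ginv ω Γ a b c x := by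
        intro a b c
        have hne := nhat_eq g ginv ω Γ x h2x hWx a b c
        have hp := hP a b c x hx
        simp only [PoisE] at hne
        linarith [hne, hp]
      have e1 : ∑ r, ∑ m, nhat g ginv ω Γ r m j x * ginv r i x * g m k x
          = ∑ r, ∑ m, Bb g ginv ω Γ m j r x * ginv r i x * g m k x :=
        Finset.sum_congr rfl fun r _ => Finset.sum_congr rfl fun m _ => by rw [key m j r]
      have e2 : ∑ r, ∑ m, nhat g ginv ω Γ r i m x * ginv r j x * g m k x
          = ∑ r, ∑ m, Bb g ginv ω Γ i m r x * ginv r j x * g m k x :=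
        Finset.sum_congr rfl fun r _ => Finset.sum_congr rfl fun m _ => by rw [key i m r]
      rw [key i j k, e1, e2]
      have hphiB := phiB g ginv ω Γ x h1x hGsx hGisx i j k
      linarith [hphiB]
    · intro hc i j m0 x hx
      have h1x : ∀ a b, ∑ c, g a c x * ginv c b x = if a = b then 1 else 0 :=
        fun a b => hinv a b x hx
      have h2x := inv_flip (fun p q => g p q x) (fun p q => ginv p q x) h1x
      have hGsx : ∀ a b, g a b x = g b a x := fun a b => hgsym a b x hx
      have hGisx := inv_symm (fun p q => g p q x) (fun p q => ginv p q x) hGsx h1x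
      have hWx : ∀ a b, ω a b x = -ω b a x := fun a b => hanti a b x hx
      have key : ∀ a b c, nhat g ginv ω Γ c a b x
          = PoisE ω Γ a b c x + Bb g ginv ω Γ a b c x :=
        fun a b c => nhat_eq g ginv ω Γ x h2x hWx a b c
      have conv1 : ∀ i j k : Fin n, ∑ r, ∑ m, nhat g ginv ω Γ r m j x * ginv r i x * g m k x
          = (∑ r, ∑ m, PoisE ω Γ m j r x * ginv r i x * g m k x)
            + (∑ r, ∑ m, Bb g ginv ω Γ m j r x * ginv r i x * g m k x) := by
        intro i j k
        rw [← Finset.sum_add_distrib]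
        refine Finset.sum_congr rfl fun r _ => ?_
        rw [← Finset.sum_add_distrib]
        refine Finset.sum_congr rfl fun m _ => ?_
        rw [key m j r]; ring
      have conv2 : ∀ i j k : Fin n, ∑ r, ∑ m, nhat g ginv ω Γ r i m x * ginv r j x * g m k x
          = (∑ r, ∑ m, PoisE ω Γ i m r x * ginv r j x * g m k x)
            + (∑ r, ∑ m, Bb g ginv ω Γ i m r x * ginv r j x * g m k x) := by
        intro i j k
        rw [← Finset.sum_add_distrib]
        refine Finset.sum_congr rfl fun r _ => ?_
        rw [← Finset.sum_add_distrib]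
        refine Finset.sum_congr rfl fun m _ => ?_
        rw [key i m r]; ring
      have hphi : ∀ i j k : Fin n, PoisE ω Γ i j k x
          - (∑ r, ∑ m, PoisE ω Γ m j r x * ginv r i x * g m k x)
          + (∑ r, ∑ m, PoisE ω Γ i m r x * ginv r j x * g m k x) = 0 := by
        intro i j k
        have h := hc i j k x hx
        rw [key i j k, conv1 i j k, conv2 i j k] at h
        have hB := phiB g ginv ω Γ x h1x hGsx hGisx i j k
        linarith [h, hB]
      have hpa : ∀ a b c, PoisE ω Γ a b c x = - PoisE ω Γ b a c x := by
        intro a b c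
        simp only [PoisE]
        have hpd := pd_antisym U hU ω hanti a b c x hx
        have hA : ∑ m, ω m b x * Γ a m c x = -∑ m, ω b m x * Γ a m c x := by
          rw [← Finset.sum_neg_distrib]
          exact Finset.sum_congr rfl fun m _ => by rw [hWx m b]; ring
        have hB2 : ∑ m, ω a m x * Γ b m c x = -∑ m, ω m a x * Γ b m c x := by
          rw [← Finset.sum_neg_distrib]
          exact Finset.sum_congr rfl fun m _ => by rw [hWx a m]; ring
        linarith [hpd, hA, hB2]
      have hrec := recover (fun p q => g p q x) (fun p q => ginv p q x) h1x h2x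
          (fun a b c => PoisE ω Γ a b c x) hpa hphi
      have hfin := hrec i j m0
      simp only [PoisE] at hfin
      exact hfin


end Stmt16
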